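/- arXiv:2503.06811 — 2 statements merged into one kernel-verified Lean document; each statement's English description precedes it below -/
import Mathlib

section
/- Let a ≥ 0, b ∈ ℝ, T > 0, G ∈ L¹(ℝ), and let F : ℝ × ℝ → ℝ be measurable with |F(u₁,x) − F(u₂,x)| ≤ l|u₁ − u₂| for all u₁, u₂, x, where l > 0. Let v₁, v₂ : ℝ × [0,T] → ℝ be measurable with vⱼ(·,t) ∈ L²(ℝ) for a.e. t, ∫₀ᵀ ‖vⱼ(·,t)‖²_{L²(ℝ)} dt < ∞, and x ↦ F(vⱼ(x,s),x) in L¹(ℝ) ∩ L²(ℝ) for a.e. s (j = 1,2); write f̂_{vⱼ}(p,s) for the Fourier transform of x ↦ F(vⱼ(x,s),x), and set W(p,t) := ∫₀ᵗ e^{(t−s)(−p⁴+ibp+a)} √(2π) Ĝ(p) ( f̂_{v₁}(p,s) − f̂_{v₂}(p,s) ) ds. Then ∫₀ᵀ ∫_ℝ |W(p,t)|² dp dt ≤ e^{2aT} l² T² ‖G‖²_{L¹(ℝ)} ‖v₁ − v₂‖²_{L²(ℝ×[0,T])}. -/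
open MeasureTheory Filter Real

/-- The Fourier transform `φ̂(p) = (2π)^{-1/2} ∫ φ(x) e^{-ipx} dx`. -/
noncomputable def FT (φ : ℝ → ℝ) (p : ℝ) : ℂ :=
  (Real.sqrt (2 * Real.pi))⁻¹ *
    ∫ x : ℝ, (φ x : ℂ) * Complex.exp (-(Complex.I * p * x))

namespace Stmt12Aux

lemma norm_ker (h : ℝ → ℝ) (p x : ℝ) :
    ‖(h x : ℂ) * Complex.exp (-(Complex.I * p * x))‖ = |h x| := by
  rw [norm_mul, Complex.norm_exp]
  simp

lemma J_sm (h : ℝ → ℝ) (hm : Measurable h) :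
    StronglyMeasurable (fun p : ℝ => ∫ x : ℝ, (h x : ℂ) * Complex.exp (-(Complex.I * p * x))) := by
  exact StronglyMeasurable.integral_prod_right
    (f := fun (p x : ℝ) => (h x : ℂ) * Complex.exp (-(Complex.I * p * x)))
    ((by fun_prop : Measurable (fun q : ℝ × ℝ =>
      (h q.2 : ℂ) * Complex.exp (-(Complex.I * q.1 * q.2)))).stronglyMeasurable)

lemma FT_sm (h : ℝ → ℝ) (hm : Measurable h) : StronglyMeasurable (FT h) := by
  unfold FT
  exact (J_sm h hm).const_mul _

lemma FT_sm2 {ψ : ℝ → ℝ → ℝ} (hψ : Measurable (Function.uncurry ψ)) :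
    StronglyMeasurable fun q : ℝ × ℝ => FT (ψ q.2) q.1 := by
  unfold FT
  apply StronglyMeasurable.const_mul
  apply StronglyMeasurable.integral_prod_right
    (f := fun (q : ℝ × ℝ) (x : ℝ) => (ψ q.2 x : ℂ) * Complex.exp (-(Complex.I * q.1 * x)))
  apply Measurable.stronglyMeasurable
  apply Measurable.mul
  · exact Complex.measurable_ofReal.comp
      (hψ.comp ((measurable_fst.snd).prodMk measurable_snd))
  · fun_prop

lemma FT_norm_le (h : ℝ → ℝ) (p : ℝ) :
    ‖FT h p‖ ≤ (Real.sqrt (2 * Real.pi))⁻¹ * ∫ x : ℝ, |h x| := by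
  unfold FT
  rw [norm_mul]
  have e1 : ‖(((Real.sqrt (2 * Real.pi))⁻¹ : ℝ) : ℂ)‖ = (Real.sqrt (2 * Real.pi))⁻¹ := by
    rw [Complex.norm_real, Real.norm_eq_abs, abs_of_nonneg (by positivity)]
  rw [e1]
  have h2 := norm_integral_le_integral_norm (μ := volume)
    (fun x : ℝ => (h x : ℂ) * Complex.exp (-(Complex.I * p * x)))
  simp_rw [norm_ker] at h2
  exact mul_le_mul_of_nonneg_left h2 (by positivity)

noncomputable def K (ε u : ℝ) : ℝ := Real.sqrt (Real.pi/ε) * Real.exp (-(u^2/(4*ε)))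

lemma K_nonneg (ε u : ℝ) : 0 ≤ K ε u := by unfold K; positivity

lemma K_cont {ε : ℝ} : Continuous (K ε) := by unfold K; fun_prop

lemma gauss_int {ε : ℝ} (hε : 0 < ε) (u : ℝ) :
    ∫ p : ℝ, Complex.exp (-(ε:ℂ) * p^2 + (-(Complex.I * u)) * p + 0) = (K ε u : ℂ) := by
  rw [integral_cexp_quadratic (by simpa using hε) (-(Complex.I * u)) 0]
  have h1 : (Real.pi / ε : ℂ) = ((Real.pi/ε : ℝ) : ℂ) := by push_cast; ring
  have h2 : ((1:ℂ)/2) = ((1/2 : ℝ) : ℂ) := by push_cast; ring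
  rw [neg_neg, h1, h2, ← Complex.ofReal_cpow (by positivity) (1/2), ← Real.sqrt_eq_rpow]
  have h3 : (0:ℂ) - (-(Complex.I * u))^2/(4 * -(ε:ℂ)) = ((-(u^2/(4*ε)) : ℝ) : ℂ) := by
    have hε' : (ε:ℂ) ≠ 0 := by exact_mod_cast hε.ne'
    rw [show (-(Complex.I * (u:ℂ)))^2 = Complex.I^2 * (u:ℂ)^2 by ring, Complex.I_sq]
    push_cast
    field_simp
    ring
  rw [h3, ← Complex.ofReal_exp]
  unfold K
  push_cast
  ring

lemma K_int {ε : ℝ} (hε : 0 < ε) : Integrable (K ε) := by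
  have h : Integrable (fun u : ℝ => Real.exp (-(1/(4*ε)) * u^2)) :=
    integrable_exp_neg_mul_sq (by positivity)
  have hfun : (fun u : ℝ => Real.sqrt (Real.pi/ε) * Real.exp (-(1/(4*ε)) * u^2)) = K ε := by
    funext u; unfold K; rw [show -(1/(4*ε)) * u^2 = -(u^2/(4*ε)) by ring]
  rw [← hfun]
  exact h.const_mul _

lemma K_total {ε : ℝ} (hε : 0 < ε) : ∫ u : ℝ, K ε u = 2 * Real.pi := by
  have hfun : (fun u : ℝ => Real.sqrt (Real.pi/ε) * Real.exp (-(1/(4*ε)) * u^2)) = K ε := by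
    funext u; unfold K; rw [show -(1/(4*ε)) * u^2 = -(u^2/(4*ε)) by ring]
  rw [← hfun, integral_const_mul, integral_gaussian, ← Real.sqrt_mul (by positivity)]
  rw [show Real.pi/ε * (Real.pi / (1/(4*ε))) = (2*Real.pi)^2 by field_simp; ring]
  exact Real.sqrt_sq (by positivity)

lemma cs_sq {α : Type*} [MeasurableSpace α] {μ : Measure α} {f : α → ENNReal}
    (hf : AEMeasurable f μ) :
    (∫⁻ s, f s ∂μ)^2 ≤ μ Set.univ * ∫⁻ s, (f s)^2 ∂μ := by
  have hconj : Real.HolderConjugate 2 2 := Real.HolderConjugate.two_two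
  have hh := ENNReal.lintegral_mul_le_Lp_mul_Lq μ hconj hf
    (aemeasurable_const (b := (1:ENNReal)))
  simp only [Pi.mul_apply, mul_one, ENNReal.one_rpow, lintegral_const, one_mul] at hh
  have hsq : ∀ x : ENNReal, (x^((1:ℝ)/2))^(2:ℕ) = x := by
    intro x
    rw [← ENNReal.rpow_natCast (x^((1:ℝ)/2)) 2, ← ENNReal.rpow_mul]
    norm_num
  calc (∫⁻ s, f s ∂μ)^2
      ≤ ((∫⁻ s, f s ^(2:ℝ) ∂μ)^((1:ℝ)/2) * (μ Set.univ)^((1:ℝ)/2))^2 :=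
        pow_le_pow_left' hh 2
    _ = (∫⁻ s, f s ^(2:ℝ) ∂μ) * μ Set.univ := by
        rw [mul_pow, hsq, hsq]
    _ = μ Set.univ * ∫⁻ s, (f s)^2 ∂μ := by
        rw [mul_comm]
        congr 1
        refine lintegral_congr fun s => ?_
        rw [← ENNReal.rpow_natCast (f s) 2]
        norm_num

lemma planch_eps {h : ℝ → ℝ} (hm : Measurable h) (h1 : Integrable h)
    (h2 : Integrable (fun x => h x ^ 2)) {ε : ℝ} (hε : 0 < ε) :
    ∫ p : ℝ, ‖FT h p‖ ^ 2 * Real.exp (-ε * p ^ 2) ≤ ∫ x : ℝ, h x ^ 2 := by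
  set J : ℝ → ℂ := fun p => ∫ x : ℝ, (h x : ℂ) * Complex.exp (-(Complex.I * p * x)) with hJdef
  have h2π : (0:ℝ) < 2 * Real.pi := by positivity
  -- conj of J
  have conjJ : ∀ p : ℝ, (starRingEnd ℂ) (J p) = ∫ y : ℝ, (h y : ℂ) * Complex.exp (Complex.I * p * y) := by
    intro p
    rw [hJdef, ← integral_conj]
    congr 1; funext y
    rw [map_mul, Complex.conj_ofReal, ← Complex.exp_conj]
    congr 2
    simp [map_mul, Complex.conj_I, Complex.conj_ofReal]
  -- the (complex) double integral
  have prodJ : ∀ p : ℝ, J p * (starRingEnd ℂ) (J p) =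
      ∫ z : ℝ × ℝ, ((h z.1 : ℂ) * Complex.exp (-(Complex.I * p * z.1))) *
        ((h z.2 : ℂ) * Complex.exp (Complex.I * p * z.2)) ∂(volume.prod volume) := by
    intro p
    rw [conjJ p, hJdef]
    exact (integral_prod_mul _ _).symm
  -- joint integrability of the triple integrand
  have Φint : Integrable (Function.uncurry fun (p : ℝ) (z : ℝ × ℝ) =>
      ((Real.exp (-ε * p^2) : ℝ) : ℂ) * (((h z.1 : ℂ) * Complex.exp (-(Complex.I * p * z.1))) *
        ((h z.2 : ℂ) * Complex.exp (Complex.I * p * z.2))))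
      (volume.prod (volume.prod volume)) := by
    apply Integrable.mono'
      (g := fun q : ℝ × ℝ × ℝ => Real.exp (-ε * q.1^2) * (|h q.2.1| * |h q.2.2|))
    · exact (integrable_exp_neg_mul_sq hε).mul_prod (h1.abs.mul_prod h1.abs)
    · apply Measurable.aestronglyMeasurable
      fun_prop
    · refine ae_of_all _ fun q => ?_
      simp only [Function.uncurry]
      rw [norm_mul, norm_mul, norm_ker]
      have e1 : ‖((Real.exp (-ε * q.1^2) : ℝ) : ℂ)‖ = Real.exp (-ε * q.1^2) := by
        rw [Complex.norm_real, Real.norm_eq_abs, abs_of_pos (Real.exp_pos _)]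
      have e2 : ‖(h q.2.2 : ℂ) * Complex.exp (Complex.I * q.1 * q.2.2)‖ = |h q.2.2| := by
        rw [norm_mul, Complex.norm_exp]
        simp
      rw [e1, e2]
  -- the Fubini identity
  have key : (∫ p : ℝ, ((Real.exp (-ε * p^2) : ℝ) : ℂ) * (J p * (starRingEnd ℂ) (J p))) =
      ∫ z : ℝ × ℝ, ((h z.1 * h z.2 * K ε (z.1 - z.2) : ℝ) : ℂ) ∂(volume.prod volume) := by
    have step1 : (∫ p : ℝ, ((Real.exp (-ε * p^2) : ℝ) : ℂ) * (J p * (starRingEnd ℂ) (J p))) =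
        ∫ p : ℝ, ∫ z : ℝ × ℝ, ((Real.exp (-ε * p^2) : ℝ) : ℂ) *
          (((h z.1 : ℂ) * Complex.exp (-(Complex.I * p * z.1))) *
           ((h z.2 : ℂ) * Complex.exp (Complex.I * p * z.2))) ∂(volume.prod volume) := by
      congr 1; funext p
      rw [prodJ p, integral_const_mul]
    rw [step1, integral_integral_swap Φint]
    congr 1; funext z
    have point : ∀ p : ℝ, ((Real.exp (-ε * p^2) : ℝ) : ℂ) *
          (((h z.1 : ℂ) * Complex.exp (-(Complex.I * p * z.1))) *
           ((h z.2 : ℂ) * Complex.exp (Complex.I * p * z.2))) =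
        ((h z.1 : ℂ) * (h z.2 : ℂ)) *
          Complex.exp (-(ε:ℂ) * p^2 + (-(Complex.I * (z.1 - z.2))) * p + 0) := by
      intro p
      rw [Complex.ofReal_exp]
      rw [show Complex.exp (-(ε:ℂ) * p^2 + (-(Complex.I * (z.1 - z.2))) * p + 0) =
        Complex.exp ((-ε * p^2 : ℝ) : ℂ) * Complex.exp (-(Complex.I * p * z.1)) *
          Complex.exp (Complex.I * p * z.2) by
        rw [← Complex.exp_add, ← Complex.exp_add]; congr 1; push_cast; ring]
      ring
    simp_rw [point]
    rw [integral_const_mul,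
      show ((z.1:ℂ) - (z.2:ℂ)) = ((z.1 - z.2 : ℝ) : ℂ) by push_cast; ring,
      gauss_int hε]
    push_cast
    ring
  -- both sides as real integrals
  have lhs_eq : (∫ p : ℝ, ((Real.exp (-ε * p^2) : ℝ) : ℂ) * (J p * (starRingEnd ℂ) (J p))) =
      ((∫ p : ℝ, Real.exp (-ε * p^2) * ‖J p‖^2 : ℝ) : ℂ) := by
    have point2 : ∀ p : ℝ, ((Real.exp (-ε * p^2) : ℝ) : ℂ) * (J p * (starRingEnd ℂ) (J p)) =
        ((Real.exp (-ε * p^2) * ‖J p‖^2 : ℝ) : ℂ) := by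
      intro p
      rw [Complex.mul_conj, Complex.normSq_eq_norm_sq]
      push_cast
      ring
    simp_rw [point2]
    exact integral_ofReal
  have key2 : ((∫ p : ℝ, Real.exp (-ε * p^2) * ‖J p‖^2 : ℝ) : ℂ) =
      ((∫ z : ℝ × ℝ, h z.1 * h z.2 * K ε (z.1 - z.2) ∂(volume.prod volume) : ℝ) : ℂ) := by
    rw [← lhs_eq, key]
    exact integral_ofReal
  have Preq : (∫ p : ℝ, Real.exp (-ε * p^2) * ‖J p‖^2) =
      ∫ z : ℝ × ℝ, h z.1 * h z.2 * K ε (z.1 - z.2) ∂(volume.prod volume) := by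
    exact_mod_cast key2
  -- integrability on the product
  have IA : Integrable (fun z : ℝ × ℝ => h z.1^2 * K ε (z.1 - z.2)) (volume.prod volume) := by
    have hsm : AEStronglyMeasurable (fun z : ℝ × ℝ => h z.1^2 * K ε (z.1 - z.2))
        (volume.prod volume) := by
      apply Measurable.aestronglyMeasurable
      exact ((hm.comp measurable_fst).pow_const 2).mul
        (((K_cont (ε := ε))).measurable.comp (measurable_fst.sub measurable_snd))
    rw [integrable_prod_iff hsm]
    constructor
    · refine ae_of_all _ fun x => ?_
      show Integrable (fun y : ℝ => h x^2 * K ε (x - y)) volume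
      exact ((K_int hε).comp_sub_left x).const_mul _
    · show Integrable (fun x : ℝ => ∫ y : ℝ, ‖h x^2 * K ε (x - y)‖) volume
      have : (fun x : ℝ => ∫ y : ℝ, ‖h x^2 * K ε (x - y)‖) =
          fun x => h x^2 * (2 * Real.pi) := by
        funext x
        have : ∀ y : ℝ, ‖h x^2 * K ε (x - y)‖ = h x^2 * K ε (x - y) := fun y => by
          rw [Real.norm_eq_abs, abs_of_nonneg (mul_nonneg (sq_nonneg _) (K_nonneg _ _))]
        simp_rw [this]
        rw [integral_const_mul, integral_sub_left_eq_self (K ε) volume x, K_total hε]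
      rw [this]
      exact h2.mul_const _
  have VA : (∫ z : ℝ × ℝ, h z.1^2 * K ε (z.1 - z.2) ∂(volume.prod volume)) =
      (∫ x : ℝ, h x^2) * (2 * Real.pi) := by
    rw [integral_prod _ IA]
    have : ∀ x : ℝ, (∫ y : ℝ, h x^2 * K ε (x - y)) = h x^2 * (2 * Real.pi) := fun x => by
      rw [integral_const_mul, integral_sub_left_eq_self (K ε) volume x, K_total hε]
    simp_rw [this]
    rw [integral_mul_const]
  have IB : Integrable (fun z : ℝ × ℝ => h z.2^2 * K ε (z.1 - z.2)) (volume.prod volume) := by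
    have := IA.swap
    refine this.congr (ae_of_all _ fun z => ?_)
    show h z.2^2 * K ε (z.2 - z.1) = h z.2^2 * K ε (z.1 - z.2)
    rw [show K ε (z.2 - z.1) = K ε (z.1 - z.2) by unfold K; rw [show (z.2-z.1)^2 = (z.1-z.2)^2 by ring]]
  have VB : (∫ z : ℝ × ℝ, h z.2^2 * K ε (z.1 - z.2) ∂(volume.prod volume)) =
      (∫ x : ℝ, h x^2) * (2 * Real.pi) := by
    rw [← VA, ← integral_prod_swap (fun z : ℝ × ℝ => h z.1^2 * K ε (z.1 - z.2))]
    congr 1; funext z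
    simp only [Prod.fst_swap, Prod.snd_swap]
    rw [show K ε (z.2 - z.1) = K ε (z.1 - z.2) by unfold K; rw [show (z.2-z.1)^2 = (z.1-z.2)^2 by ring]]
  have Imaj : Integrable (fun z : ℝ × ℝ =>
      (h z.1^2 * K ε (z.1 - z.2) + h z.2^2 * K ε (z.1 - z.2)) / 2) (volume.prod volume) :=
    (IA.add IB).div_const 2
  have hbound : ∀ z : ℝ × ℝ, ‖h z.1 * h z.2 * K ε (z.1 - z.2)‖ ≤
      (h z.1^2 * K ε (z.1 - z.2) + h z.2^2 * K ε (z.1 - z.2)) / 2 := by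
    intro z
    have h2m := two_mul_le_add_sq |h z.1| |h z.2|
    rw [Real.norm_eq_abs, abs_mul, abs_mul, abs_of_nonneg (K_nonneg _ _)]
    have hK := K_nonneg ε (z.1 - z.2)
    rw [sq_abs, sq_abs] at h2m
    nlinarith [abs_nonneg (h z.1), abs_nonneg (h z.2)]
  have ILHS : Integrable (fun z : ℝ × ℝ => h z.1 * h z.2 * K ε (z.1 - z.2)) (volume.prod volume) := by
    apply Integrable.mono' Imaj
    · apply Measurable.aestronglyMeasurable
      exact ((hm.comp measurable_fst).mul (hm.comp measurable_snd)).mul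
        (((K_cont (ε := ε))).measurable.comp (measurable_fst.sub measurable_snd))
    · exact ae_of_all _ hbound
  have Ple : (∫ p : ℝ, Real.exp (-ε * p^2) * ‖J p‖^2) ≤ (∫ x : ℝ, h x^2) * (2 * Real.pi) := by
    rw [Preq]
    calc (∫ z : ℝ × ℝ, h z.1 * h z.2 * K ε (z.1 - z.2) ∂(volume.prod volume))
        ≤ ∫ z : ℝ × ℝ, (h z.1^2 * K ε (z.1 - z.2) + h z.2^2 * K ε (z.1 - z.2)) / 2
            ∂(volume.prod volume) := by
          refine integral_mono ILHS Imaj fun z => le_trans (le_abs_self _) ?_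
          rw [← Real.norm_eq_abs]
          exact hbound z
      _ = ((∫ x : ℝ, h x^2) * (2 * Real.pi) + (∫ x : ℝ, h x^2) * (2 * Real.pi)) / 2 := by
          rw [integral_div, integral_add IA IB, VA, VB]
      _ = (∫ x : ℝ, h x^2) * (2 * Real.pi) := by ring
  -- conclude
  have hFTnorm : ∀ p : ℝ, ‖FT h p‖^2 * Real.exp (-ε * p^2) =
      (2 * Real.pi)⁻¹ * (Real.exp (-ε * p^2) * ‖J p‖^2) := by
    intro p
    unfold FT
    rw [norm_mul, mul_pow]
    have : ‖(((Real.sqrt (2 * Real.pi))⁻¹ : ℝ) : ℂ)‖ = (Real.sqrt (2 * Real.pi))⁻¹ := by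
      rw [Complex.norm_real, Real.norm_eq_abs, abs_of_nonneg (by positivity)]
    rw [this, inv_pow, Real.sq_sqrt h2π.le]
    ring
  calc (∫ p : ℝ, ‖FT h p‖ ^ 2 * Real.exp (-ε * p ^ 2))
      = (2 * Real.pi)⁻¹ * ∫ p : ℝ, Real.exp (-ε * p^2) * ‖J p‖^2 := by
        simp_rw [hFTnorm]; rw [integral_const_mul]
    _ ≤ (2 * Real.pi)⁻¹ * ((∫ x : ℝ, h x^2) * (2 * Real.pi)) := by
        exact mul_le_mul_of_nonneg_left Ple (by positivity)
    _ = ∫ x : ℝ, h x^2 := by field_simp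

lemma planch {h : ℝ → ℝ} (hm : Measurable h) (h1 : Integrable h)
    (h2 : Integrable (fun x => h x ^ 2)) :
    ∫⁻ p : ℝ, (‖FT h p‖₊ : ENNReal) ^ 2 ≤ ENNReal.ofReal (∫ x : ℝ, h x ^ 2) := by
  have hFTme : Measurable (FT h) := (FT_sm h hm).measurable
  set c : ℝ := (Real.sqrt (2 * Real.pi))⁻¹ * ∫ x : ℝ, |h x| with hc
  set f : ℕ → ℝ → ENNReal := fun n p =>
    (‖FT h p‖₊ : ENNReal) ^ 2 * ENNReal.ofReal (Real.exp (-(1/((n:ℝ)+1)) * p^2)) with hf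
  have hmono : ∀ p : ℝ, Monotone fun n => f n p := by
    intro p m n hmn
    refine mul_le_mul_right (ENNReal.ofReal_le_ofReal (Real.exp_le_exp.2 ?_)) _
    have h1' : ((m:ℝ)+1) ≤ (n:ℝ)+1 := by
      have := (Nat.cast_le (α := ℝ)).2 hmn; linarith
    have h2' : (1:ℝ)/((n:ℝ)+1) ≤ 1/((m:ℝ)+1) :=
      one_div_le_one_div_of_le (by positivity) h1'
    nlinarith [sq_nonneg p]
  have hsup : ∀ p : ℝ, (⨆ n, f n p) = (‖FT h p‖₊ : ENNReal) ^ 2 := by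
    intro p
    rw [hf]
    simp only
    rw [← ENNReal.mul_iSup]
    have htend : Tendsto (fun n : ℕ => ENNReal.ofReal (Real.exp (-(1/((n:ℝ)+1)) * p^2)))
        atTop (nhds 1) := by
      have t1 : Tendsto (fun n : ℕ => -(1/((n:ℝ)+1)) * p^2) atTop (nhds 0) := by
        have := tendsto_one_div_add_atTop_nhds_zero_nat.neg.mul_const (p^2)
        simpa using this
      have t2 : Tendsto (fun n : ℕ => Real.exp (-(1/((n:ℝ)+1)) * p^2)) atTop (nhds 1) := by
        have := (Real.continuous_exp.tendsto 0).comp t1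
        rw [Real.exp_zero] at this; exact this
      have t3 := (ENNReal.continuous_ofReal.tendsto 1).comp t2
      rw [ENNReal.ofReal_one] at t3; exact t3
    have hmono2 : Monotone fun n : ℕ => ENNReal.ofReal (Real.exp (-(1/((n:ℝ)+1)) * p^2)) := by
      intro m n hmn
      refine ENNReal.ofReal_le_ofReal (Real.exp_le_exp.2 ?_)
      have h1' : ((m:ℝ)+1) ≤ (n:ℝ)+1 := by
        have := (Nat.cast_le (α := ℝ)).2 hmn; linarith
      have h2' : (1:ℝ)/((n:ℝ)+1) ≤ 1/((m:ℝ)+1) :=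
        one_div_le_one_div_of_le (by positivity) h1'
      nlinarith [sq_nonneg p]
    rw [iSup_eq_of_tendsto hmono2 htend, mul_one]
  have hper : ∀ n : ℕ, (∫⁻ p : ℝ, f n p) ≤ ENNReal.ofReal (∫ x : ℝ, h x ^ 2) := by
    intro n
    have hεn : (0:ℝ) < 1/((n:ℝ)+1) := by positivity
    have hint : Integrable (fun p : ℝ => ‖FT h p‖^2 * Real.exp (-(1/((n:ℝ)+1)) * p^2)) := by
      apply Integrable.mono' (((integrable_exp_neg_mul_sq hεn).const_mul (c^2)))
      · exact ((hFTme.norm.pow_const 2).mul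
          (Real.continuous_exp.measurable.comp (by fun_prop))).aestronglyMeasurable
      · refine ae_of_all _ fun p => ?_
        rw [Real.norm_eq_abs, abs_of_nonneg (by positivity)]
        have hb := FT_norm_le h p
        have : ‖FT h p‖^2 ≤ c^2 := by
          rw [hc]; nlinarith [norm_nonneg (FT h p)]
        nlinarith [Real.exp_pos (-(1/((n:ℝ)+1)) * p^2)]
    have heq : (∫⁻ p : ℝ, f n p) =
        ENNReal.ofReal (∫ p : ℝ, ‖FT h p‖^2 * Real.exp (-(1/((n:ℝ)+1)) * p^2)) := by
      rw [ofReal_integral_eq_lintegral_ofReal hint (ae_of_all _ fun p => by positivity)]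
      congr 1; funext p
      rw [ENNReal.ofReal_mul (by positivity), ENNReal.ofReal_pow (norm_nonneg _),
        ofReal_norm, enorm_eq_nnnorm]
    rw [heq]
    exact ENNReal.ofReal_le_ofReal (planch_eps hm h1 h2 hεn)
  have haem : ∀ n : ℕ, AEMeasurable (f n) volume := by
    intro n
    refine Measurable.aemeasurable ?_
    exact ((hFTme.nnnorm.coe_nnreal_ennreal).pow_const 2).mul
      (ENNReal.measurable_ofReal.comp (Real.continuous_exp.measurable.comp (by fun_prop)))
  calc (∫⁻ p : ℝ, (‖FT h p‖₊ : ENNReal) ^ 2) = ∫⁻ p : ℝ, ⨆ n, f n p := by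
        refine lintegral_congr fun p => (hsup p).symm
    _ = ⨆ n, ∫⁻ p : ℝ, f n p := lintegral_iSup' haem (ae_of_all _ hmono)
    _ ≤ ENNReal.ofReal (∫ x : ℝ, h x ^ 2) := iSup_le hper

lemma sq_diff_int {w₁ w₂ : ℝ → ℝ} (hw₁ : Measurable w₁) (hw₂ : Measurable w₂)
    (hq₁ : Integrable (fun x => w₁ x ^ 2)) (hq₂ : Integrable (fun x => w₂ x ^ 2)) :
    Integrable (fun x => (w₁ x - w₂ x) ^ 2) := by
  have hab : Integrable (fun x => w₁ x * w₂ x) := by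
    apply Integrable.mono' ((hq₁.add hq₂).div_const 2)
      ((hw₁.mul hw₂).aestronglyMeasurable)
    refine ae_of_all _ fun x => ?_
    have h2m := two_mul_le_add_sq |w₁ x| |w₂ x|
    rw [sq_abs, sq_abs] at h2m
    change ‖w₁ x * w₂ x‖ ≤ _
    rw [Real.norm_eq_abs, abs_mul]
    simp only [Pi.add_apply]
    linarith
  have : (fun x => (w₁ x - w₂ x) ^ 2)
      = fun x => (w₁ x ^ 2 + w₂ x ^ 2) - 2 * (w₁ x * w₂ x) := by
    funext x; ring
  rw [this]
  exact (hq₁.add hq₂).sub (hab.const_mul 2)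

lemma step_planch (F : ℝ → ℝ → ℝ) (l : ℝ)
    (hlip : ∀ u₁ u₂ x : ℝ, |F u₁ x - F u₂ x| ≤ l * |u₁ - u₂|)
    (hFm : Measurable (Function.uncurry F))
    (w₁ w₂ : ℝ → ℝ) (hw₁ : Measurable w₁) (hw₂ : Measurable w₂)
    (hi₁ : Integrable (fun x => F (w₁ x) x)) (hi₁2 : Integrable (fun x => (F (w₁ x) x)^2))
    (hi₂ : Integrable (fun x => F (w₂ x) x)) (hi₂2 : Integrable (fun x => (F (w₂ x) x)^2))
    (hq₁ : Integrable (fun x => w₁ x ^ 2)) (hq₂ : Integrable (fun x => w₂ x ^ 2)) :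
    ∫⁻ p : ℝ, (‖FT (fun x => F (w₁ x) x) p - FT (fun x => F (w₂ x) x) p‖₊ : ENNReal)^2
      ≤ ENNReal.ofReal (l^2) * ENNReal.ofReal (∫ x : ℝ, (w₁ x - w₂ x)^2) := by
  set d : ℝ → ℝ := fun x => F (w₁ x) x - F (w₂ x) x with hd
  have hdm : Measurable d := by
    apply Measurable.sub
    · exact hFm.comp (hw₁.prodMk measurable_id)
    · exact hFm.comp (hw₂.prodMk measurable_id)
  have hd1 : Integrable d := hi₁.sub hi₂
  have hvd2 : Integrable (fun x => (w₁ x - w₂ x) ^ 2) := sq_diff_int hw₁ hw₂ hq₁ hq₂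
  have hdb : ∀ x : ℝ, d x ^ 2 ≤ l^2 * (w₁ x - w₂ x)^2 := by
    intro x
    have h0 := hlip (w₁ x) (w₂ x) x
    have h1 : d x ^ 2 ≤ (l * |w₁ x - w₂ x|) ^ 2 := by
      rw [← sq_abs (d x)]
      apply pow_le_pow_left₀ (abs_nonneg _) h0
    calc d x ^ 2 ≤ (l * |w₁ x - w₂ x|) ^ 2 := h1
      _ = l^2 * (w₁ x - w₂ x)^2 := by rw [mul_pow, sq_abs]
  have hd2 : Integrable (fun x => d x ^ 2) := by
    apply Integrable.mono' (hvd2.const_mul (l^2)) (hdm.pow_const 2).aestronglyMeasurable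
    refine ae_of_all _ fun x => ?_
    rw [Real.norm_eq_abs, abs_of_nonneg (sq_nonneg _)]
    exact hdb x
  have hFTdiff : ∀ p : ℝ, FT (fun x => F (w₁ x) x) p - FT (fun x => F (w₂ x) x) p
      = FT d p := by
    intro p
    unfold FT
    rw [← mul_sub]
    congr 1
    have int1 : Integrable (fun x : ℝ => (F (w₁ x) x : ℂ) * Complex.exp (-(Complex.I * p * x))) := by
      apply Integrable.mono' hi₁.abs
        (((Complex.measurable_ofReal.comp (hFm.comp (hw₁.prodMk measurable_id))).mul
          (by fun_prop)).aestronglyMeasurable)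
      exact ae_of_all _ fun x => le_of_eq (norm_ker _ p x)
    have int2 : Integrable (fun x : ℝ => (F (w₂ x) x : ℂ) * Complex.exp (-(Complex.I * p * x))) := by
      apply Integrable.mono' hi₂.abs
        (((Complex.measurable_ofReal.comp (hFm.comp (hw₂.prodMk measurable_id))).mul
          (by fun_prop)).aestronglyMeasurable)
      exact ae_of_all _ fun x => le_of_eq (norm_ker _ p x)
    rw [← integral_sub int1 int2]
    congr 1; funext x
    rw [hd]
    push_cast
    ring
  calc (∫⁻ p : ℝ, (‖FT (fun x => F (w₁ x) x) p - FT (fun x => F (w₂ x) x) p‖₊ : ENNReal)^2)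
      = ∫⁻ p : ℝ, (‖FT d p‖₊ : ENNReal)^2 := by
        refine lintegral_congr fun p => ?_
        rw [hFTdiff p]
    _ ≤ ENNReal.ofReal (∫ x : ℝ, d x ^ 2) := planch hdm hd1 hd2
    _ ≤ ENNReal.ofReal (∫ x : ℝ, l^2 * (w₁ x - w₂ x)^2) := by
        apply ENNReal.ofReal_le_ofReal
        exact integral_mono hd2 (hvd2.const_mul _) hdb
    _ = ENNReal.ofReal (l^2) * ENNReal.ofReal (∫ x : ℝ, (w₁ x - w₂ x)^2) := by
        rw [integral_const_mul, ENNReal.ofReal_mul (sq_nonneg l)]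

lemma hB_lemma (T : ℝ) (hT : 0 < T) (v₁ v₂ : ℝ → ℝ → ℝ)
    (hv₁meas : Measurable (Function.uncurry v₁))
    (hv₂meas : Measurable (Function.uncurry v₂))
    (hv₁2 : ∀ᵐ t ∂(volume.restrict (Set.Icc (0:ℝ) T)), Integrable (fun x => (v₁ x t) ^ 2))
    (hv₂2 : ∀ᵐ t ∂(volume.restrict (Set.Icc (0:ℝ) T)), Integrable (fun x => (v₂ x t) ^ 2))
    (hv₁L2 : (∫⁻ t in Set.Icc (0:ℝ) T, ENNReal.ofReal (∫ x : ℝ, (v₁ x t) ^ 2)) < ⊤)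
    (hv₂L2 : (∫⁻ t in Set.Icc (0:ℝ) T, ENNReal.ofReal (∫ x : ℝ, (v₂ x t) ^ 2)) < ⊤) :
    (∫⁻ s in Set.Ioc (0:ℝ) T, ENNReal.ofReal (∫ x : ℝ, (v₁ x s - v₂ x s)^2))
      = ENNReal.ofReal (∫ t in (0:ℝ)..T, ∫ x : ℝ, (v₁ x t - v₂ x t) ^ 2) := by
  have hm1 : ∀ t : ℝ, Measurable fun x => v₁ x t := fun t =>
    hv₁meas.comp (measurable_id.prodMk measurable_const)
  have hm2 : ∀ t : ℝ, Measurable fun x => v₂ x t := fun t =>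
    hv₂meas.comp (measurable_id.prodMk measurable_const)
  have hsm : StronglyMeasurable (fun t : ℝ => ∫ x : ℝ, (v₁ x t - v₂ x t)^2) := by
    apply StronglyMeasurable.integral_prod_right (f := fun (t x : ℝ) => (v₁ x t - v₂ x t)^2)
    apply Measurable.stronglyMeasurable
    have : Measurable fun q : ℝ × ℝ => (v₁ q.2 q.1 - v₂ q.2 q.1)^2 :=
      (((hv₁meas.comp (measurable_snd.prodMk measurable_fst))).sub
        ((hv₂meas.comp (measurable_snd.prodMk measurable_fst)))).pow_const 2
    exact this
  have hsm1 : StronglyMeasurable (fun t : ℝ => ∫ x : ℝ, (v₁ x t)^2) := by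
    apply StronglyMeasurable.integral_prod_right (f := fun (t x : ℝ) => (v₁ x t)^2)
    apply Measurable.stronglyMeasurable
    exact ((hv₁meas.comp (measurable_snd.prodMk measurable_fst))).pow_const 2
  have hsm2 : StronglyMeasurable (fun t : ℝ => ∫ x : ℝ, (v₂ x t)^2) := by
    apply StronglyMeasurable.integral_prod_right (f := fun (t x : ℝ) => (v₂ x t)^2)
    apply Measurable.stronglyMeasurable
    exact ((hv₂meas.comp (measurable_snd.prodMk measurable_fst))).pow_const 2
  have h3 := ae_restrict_of_ae_restrict_of_subset Set.Ioc_subset_Icc_self hv₁2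
  have h4 := ae_restrict_of_ae_restrict_of_subset Set.Ioc_subset_Icc_self hv₂2
  have hfi : (∫⁻ t in Set.Ioc (0:ℝ) T, (‖∫ x : ℝ, (v₁ x t - v₂ x t)^2‖₊ : ENNReal)) < ⊤ := by
    calc (∫⁻ t in Set.Ioc (0:ℝ) T, (‖∫ x : ℝ, (v₁ x t - v₂ x t)^2‖₊ : ENNReal))
        ≤ ∫⁻ t in Set.Ioc (0:ℝ) T, (2 * ENNReal.ofReal (∫ x : ℝ, (v₁ x t)^2)
            + 2 * ENNReal.ofReal (∫ x : ℝ, (v₂ x t)^2)) := by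
          apply lintegral_mono_ae
          filter_upwards [h3, h4] with t ht3 ht4
          have hd2 : Integrable (fun x => (v₁ x t - v₂ x t)^2) :=
            sq_diff_int (hm1 t) (hm2 t) ht3 ht4
          have hle : (∫ x : ℝ, (v₁ x t - v₂ x t)^2)
              ≤ 2*(∫ x : ℝ, (v₁ x t)^2) + 2*(∫ x : ℝ, (v₂ x t)^2) := by
            have hmono : (∫ x : ℝ, (v₁ x t - v₂ x t)^2)
                ≤ ∫ x : ℝ, 2*(v₁ x t)^2 + 2*(v₂ x t)^2 :=
              integral_mono hd2 ((ht3.const_mul 2).add (ht4.const_mul 2))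
                (fun x => by nlinarith [sq_nonneg (v₁ x t + v₂ x t)])
            rwa [integral_add (ht3.const_mul 2) (ht4.const_mul 2),
              integral_const_mul, integral_const_mul] at hmono
          calc (‖∫ x : ℝ, (v₁ x t - v₂ x t)^2‖₊ : ENNReal)
              = ENNReal.ofReal (∫ x : ℝ, (v₁ x t - v₂ x t)^2) := by
                rw [← enorm_eq_nnnorm, ← ofReal_norm, Real.norm_eq_abs,
                  abs_of_nonneg (integral_nonneg fun x => sq_nonneg _)]
            _ ≤ ENNReal.ofReal (2*(∫ x : ℝ, (v₁ x t)^2) + 2*(∫ x : ℝ, (v₂ x t)^2)) :=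
                ENNReal.ofReal_le_ofReal hle
            _ ≤ 2 * ENNReal.ofReal (∫ x : ℝ, (v₁ x t)^2)
                + 2 * ENNReal.ofReal (∫ x : ℝ, (v₂ x t)^2) := by
                refine le_trans ENNReal.ofReal_add_le (add_le_add ?_ ?_) <;>
                  · rw [ENNReal.ofReal_mul (by norm_num : (0:ℝ) ≤ 2)]
                    simp
      _ = 2 * (∫⁻ t in Set.Ioc (0:ℝ) T, ENNReal.ofReal (∫ x : ℝ, (v₁ x t)^2))
          + 2 * (∫⁻ t in Set.Ioc (0:ℝ) T, ENNReal.ofReal (∫ x : ℝ, (v₂ x t)^2)) := by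
          rw [lintegral_add_left]
          · rw [lintegral_const_mul' 2 _ (by norm_num), lintegral_const_mul' 2 _ (by norm_num)]
          · exact (ENNReal.measurable_ofReal.comp hsm1.measurable).const_mul 2
      _ ≤ 2 * (∫⁻ t in Set.Icc (0:ℝ) T, ENNReal.ofReal (∫ x : ℝ, (v₁ x t)^2))
          + 2 * (∫⁻ t in Set.Icc (0:ℝ) T, ENNReal.ofReal (∫ x : ℝ, (v₂ x t)^2)) :=
          add_le_add (mul_le_mul_right (lintegral_mono_set Set.Ioc_subset_Icc_self) 2)
            (mul_le_mul_right (lintegral_mono_set Set.Ioc_subset_Icc_self) 2)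
      _ < ⊤ := by
          apply ENNReal.add_lt_top.2
          exact ⟨ENNReal.mul_lt_top (by norm_num) hv₁L2,
            ENNReal.mul_lt_top (by norm_num) hv₂L2⟩
  have hint : Integrable (fun t : ℝ => ∫ x : ℝ, (v₁ x t - v₂ x t)^2)
      (volume.restrict (Set.Ioc (0:ℝ) T)) := ⟨hsm.aestronglyMeasurable, hfi⟩
  rw [intervalIntegral.integral_of_le hT.le]
  exact (ofReal_integral_eq_lintegral_ofReal hint
    (ae_of_all _ fun t => integral_nonneg fun x => sq_nonneg _)).symm

lemma W_sq_bound {t T : ℝ} (ht : t ∈ Set.Ioc (0:ℝ) T) (c : ℝ) (hc : 0 ≤ c)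
    (Wv : ℂ) (f : ℝ → ℂ) (hfm : Measurable f) (E : ℝ → ℂ)
    (hWv : Wv = ∫ s in (0:ℝ)..t, E s * f s)
    (hE : ∀ s ∈ Set.Ioc (0:ℝ) t, ‖E s‖ ≤ c) :
    (‖Wv‖₊ : ENNReal)^2 ≤ ENNReal.ofReal c ^ 2 * ENNReal.ofReal T *
      ∫⁻ s in Set.Ioc (0:ℝ) T, (‖f s‖₊ : ENNReal)^2 := by
  have hfm' : Measurable fun s => (‖f s‖₊ : ENNReal) := hfm.nnnorm.coe_nnreal_ennreal
  have step1 : (‖Wv‖₊ : ENNReal) ≤ ENNReal.ofReal c * ∫⁻ s in Set.Ioc (0:ℝ) t,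
      (‖f s‖₊ : ENNReal) := by
    rw [hWv, intervalIntegral.integral_of_le ht.1.le]
    refine le_trans (enorm_integral_le_lintegral_enorm _) ?_
    have hpt : ∀ s ∈ Set.Ioc (0:ℝ) t, (‖E s * f s‖₊ : ENNReal)
        ≤ ENNReal.ofReal c * (‖f s‖₊ : ENNReal) := by
      intro s hs
      rw [← enorm_eq_nnnorm, ← ofReal_norm, ← enorm_eq_nnnorm, ← ofReal_norm,
        ← ENNReal.ofReal_mul hc, norm_mul]
      exact ENNReal.ofReal_le_ofReal (mul_le_mul_of_nonneg_right (hE s hs) (norm_nonneg _))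
    refine le_trans (setLIntegral_mono (measurable_const.mul hfm') hpt) ?_
    exact le_of_eq (lintegral_const_mul' _ _ ENNReal.ofReal_ne_top)
  calc (‖Wv‖₊ : ENNReal)^2
      ≤ (ENNReal.ofReal c * ∫⁻ s in Set.Ioc (0:ℝ) t, (‖f s‖₊ : ENNReal))^2 :=
        pow_le_pow_left' step1 2
    _ = ENNReal.ofReal c ^ 2 * (∫⁻ s in Set.Ioc (0:ℝ) t, (‖f s‖₊ : ENNReal))^2 :=
        mul_pow _ _ _
    _ ≤ ENNReal.ofReal c ^ 2 * ((volume.restrict (Set.Ioc (0:ℝ) t)) Set.univ *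
          ∫⁻ s in Set.Ioc (0:ℝ) t, (‖f s‖₊ : ENNReal)^2) :=
        mul_le_mul_right (cs_sq hfm'.aemeasurable) _
    _ ≤ ENNReal.ofReal c ^ 2 * (ENNReal.ofReal T *
          ∫⁻ s in Set.Ioc (0:ℝ) T, (‖f s‖₊ : ENNReal)^2) := by
        refine mul_le_mul_right (mul_le_mul' ?_ ?_) _
        · rw [Measure.restrict_apply_univ, Real.volume_Ioc, sub_zero]
          exact ENNReal.ofReal_le_ofReal ht.2
        · exact lintegral_mono_set (Set.Ioc_subset_Ioc le_rfl ht.2)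
    _ = ENNReal.ofReal c ^ 2 * ENNReal.ofReal T *
          ∫⁻ s in Set.Ioc (0:ℝ) T, (‖f s‖₊ : ENNReal)^2 := by rw [mul_assoc]

end Stmt12Aux



set_option maxHeartbeats 1000000 in
open Stmt12Aux in
theorem stmt12 (a b T l : ℝ) (ha : 0 ≤ a) (hT : 0 < T) (hl : 0 < l)
    (G : ℝ → ℝ) (hG : Integrable G)
    (F : ℝ → ℝ → ℝ) (hFmeas : Measurable (Function.uncurry F))
    (hlip : ∀ u₁ u₂ x : ℝ, |F u₁ x - F u₂ x| ≤ l * |u₁ - u₂|)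
    (v₁ v₂ : ℝ → ℝ → ℝ)
    (hv₁meas : Measurable (Function.uncurry v₁))
    (hv₂meas : Measurable (Function.uncurry v₂))
    (hv₁2 : ∀ᵐ t ∂(volume.restrict (Set.Icc (0:ℝ) T)),
      Integrable (fun x => (v₁ x t) ^ 2))
    (hv₂2 : ∀ᵐ t ∂(volume.restrict (Set.Icc (0:ℝ) T)),
      Integrable (fun x => (v₂ x t) ^ 2))
    (hv₁L2 : (∫⁻ t in Set.Icc (0:ℝ) T,
      ENNReal.ofReal (∫ x : ℝ, (v₁ x t) ^ 2)) < ⊤)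
    (hv₂L2 : (∫⁻ t in Set.Icc (0:ℝ) T,
      ENNReal.ofReal (∫ x : ℝ, (v₂ x t) ^ 2)) < ⊤)
    (hFv₁ : ∀ᵐ s ∂(volume.restrict (Set.Icc (0:ℝ) T)),
      Integrable (fun x => F (v₁ x s) x) ∧ Integrable (fun x => (F (v₁ x s) x) ^ 2))
    (hFv₂ : ∀ᵐ s ∂(volume.restrict (Set.Icc (0:ℝ) T)),
      Integrable (fun x => F (v₂ x s) x) ∧ Integrable (fun x => (F (v₂ x s) x) ^ 2))
    (W : ℝ → ℝ → ℂ)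
    (hW : ∀ p t : ℝ, W p t = ∫ s in (0:ℝ)..t,
      Complex.exp (((t - s : ℝ) : ℂ) * (-(p : ℂ) ^ 4 + Complex.I * b * p + a)) *
        (Real.sqrt (2 * Real.pi) : ℂ) *
        FT G p * (FT (fun x => F (v₁ x s) x) p - FT (fun x => F (v₂ x s) x) p)) :
    ∫ t in (0:ℝ)..T, ∫ p : ℝ, ‖W p t‖ ^ 2 ≤
      Real.exp (2 * a * T) * l ^ 2 * T ^ 2 * (∫ x : ℝ, |G x|) ^ 2 *
        ∫ t in (0:ℝ)..T, ∫ x : ℝ, (v₁ x t - v₂ x t) ^ 2 := by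
  have h2π : (0:ℝ) < 2 * Real.pi := by positivity
  have hGnn : (0:ℝ) ≤ ∫ x : ℝ, |G x| := integral_nonneg fun x => abs_nonneg _
  have hRnn : (0:ℝ) ≤ ∫ t in (0:ℝ)..T, ∫ x : ℝ, (v₁ x t - v₂ x t) ^ 2 := by
    apply intervalIntegral.integral_nonneg hT.le
    intro t _
    exact integral_nonneg fun x => sq_nonneg _
  have hRHSnn : (0:ℝ) ≤ Real.exp (2*a*T) * l^2 * T^2 * (∫ x : ℝ, |G x|)^2 *
      ∫ t in (0:ℝ)..T, ∫ x : ℝ, (v₁ x t - v₂ x t) ^ 2 := by positivity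
  -- joint measurability
  have hu1 : Measurable (Function.uncurry fun s x => F (v₁ x s) x) := by
    unfold Function.uncurry
    exact hFmeas.comp ((hv₁meas.comp (measurable_snd.prodMk measurable_fst)).prodMk
      measurable_snd)
  have hu2 : Measurable (Function.uncurry fun s x => F (v₂ x s) x) := by
    unfold Function.uncurry
    exact hFmeas.comp ((hv₂meas.comp (measurable_snd.prodMk measurable_fst)).prodMk
      measurable_snd)
  have hDcm : Measurable fun q : ℝ × ℝ =>
      FT (fun x => F (v₁ x q.2) x) q.1 - FT (fun x => F (v₂ x q.2) x) q.1 :=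
    ((FT_sm2 hu1).sub (FT_sm2 hu2)).measurable
  -- the G factor bound
  have hGb : ∀ p : ℝ, ‖(Real.sqrt (2*Real.pi) : ℂ) * FT G p‖ ≤ ∫ x : ℝ, |G x| := by
    intro p
    unfold FT
    rw [← mul_assoc, show ((Real.sqrt (2*Real.pi) : ℝ) : ℂ) *
        (((Real.sqrt (2*Real.pi))⁻¹ : ℝ) : ℂ) = 1 by
      rw [← Complex.ofReal_mul, mul_inv_cancel₀ (ne_of_gt (Real.sqrt_pos.2 h2π)),
        Complex.ofReal_one], one_mul]
    have h2 := norm_integral_le_integral_norm (μ := volume)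
      (fun x : ℝ => (G x : ℂ) * Complex.exp (-(Complex.I * p * x)))
    simp_rw [norm_ker] at h2
    exact h2
  -- the exponential factor bound
  have hExpb : ∀ t ∈ Set.Ioc (0:ℝ) T, ∀ s ∈ Set.Ioc (0:ℝ) t, ∀ p : ℝ,
      ‖Complex.exp (((t - s : ℝ) : ℂ) * (-(p:ℂ)^4 + Complex.I * b * p + a))‖
        ≤ Real.exp (a*T) := by
    intro t ht s hs p
    rw [Complex.norm_exp]
    apply Real.exp_le_exp.2
    have hre : ((((t - s : ℝ)) : ℂ) * (-(p:ℂ)^4 + Complex.I * b * p + a)).re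
        = (t - s) * (-(p^4) + a) := by
      rw [Complex.re_ofReal_mul]
      congr 1
      simp [← Complex.ofReal_pow]
    rw [hre]
    have hp4 : (0:ℝ) ≤ p^4 := by positivity
    nlinarith [mul_nonneg (sub_nonneg.2 hs.2) hp4,
      mul_le_mul_of_nonneg_right (show t - s ≤ T by linarith [hs.1, ht.2]) ha]
  -- squared bound on W
  have hW2 : ∀ t ∈ Set.Ioc (0:ℝ) T, ∀ p : ℝ, (‖W p t‖₊ : ENNReal)^2 ≤
      ENNReal.ofReal (Real.exp (a*T) * ∫ x : ℝ, |G x|) ^ 2 * ENNReal.ofReal T *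
      ∫⁻ s in Set.Ioc (0:ℝ) T,
        (‖FT (fun x => F (v₁ x s) x) p - FT (fun x => F (v₂ x s) x) p‖₊ : ENNReal)^2 := by
    intro t ht p
    refine W_sq_bound ht _ (by positivity) (W p t)
      (fun s => FT (fun x => F (v₁ x s) x) p - FT (fun x => F (v₂ x s) x) p)
      (hDcm.comp (measurable_const.prodMk measurable_id))
      (fun s => Complex.exp (((t - s : ℝ):ℂ) * (-(p:ℂ)^4 + Complex.I*b*p + a)) *
        (Real.sqrt (2*Real.pi):ℂ) * FT G p)
      (hW p t) ?_
    intro s hs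
    show ‖Complex.exp (((t - s : ℝ):ℂ) * (-(p:ℂ)^4 + Complex.I*b*p + a)) *
      (Real.sqrt (2*Real.pi):ℂ) * FT G p‖ ≤ Real.exp (a*T) * ∫ x : ℝ, |G x|
    rw [mul_assoc (Complex.exp (((t - s : ℝ):ℂ) * (-(p:ℂ)^4 + Complex.I*b*p + a))), norm_mul]
    exact le_trans (mul_le_mul (hExpb t ht s hs p) (hGb p) (norm_nonneg _)
      (Real.exp_pos _).le) le_rfl
  -- inner p-integral bound, uniform in t
  have hInner : ∀ t ∈ Set.Ioc (0:ℝ) T, (∫⁻ p : ℝ, (‖W p t‖₊ : ENNReal)^2) ≤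
      ENNReal.ofReal (Real.exp (a*T) * ∫ x : ℝ, |G x|) ^ 2 * ENNReal.ofReal T *
      ∫⁻ p : ℝ, ∫⁻ s in Set.Ioc (0:ℝ) T,
        (‖FT (fun x => F (v₁ x s) x) p - FT (fun x => F (v₂ x s) x) p‖₊ : ENNReal)^2 := by
    intro t ht
    refine le_trans (lintegral_mono (fun p => hW2 t ht p)) ?_
    rw [lintegral_const_mul' _ _
      (ENNReal.mul_ne_top (by simp [ENNReal.pow_ne_top ENNReal.ofReal_ne_top])
        ENNReal.ofReal_ne_top)]
  -- swap the p and s integrals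
  have hswap : (∫⁻ p : ℝ, ∫⁻ s in Set.Ioc (0:ℝ) T,
        (‖FT (fun x => F (v₁ x s) x) p - FT (fun x => F (v₂ x s) x) p‖₊ : ENNReal)^2)
      = ∫⁻ s in Set.Ioc (0:ℝ) T, ∫⁻ p : ℝ,
        (‖FT (fun x => F (v₁ x s) x) p - FT (fun x => F (v₂ x s) x) p‖₊ : ENNReal)^2 := by
    apply lintegral_lintegral_swap
    exact ((hDcm.nnnorm.coe_nnreal_ennreal).pow_const 2).aemeasurable
  -- a.e. Plancherel bound in s
  have hae : ∀ᵐ s ∂(volume.restrict (Set.Ioc (0:ℝ) T)),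
      (∫⁻ p : ℝ,
        (‖FT (fun x => F (v₁ x s) x) p - FT (fun x => F (v₂ x s) x) p‖₊ : ENNReal)^2)
      ≤ ENNReal.ofReal (l^2) * ENNReal.ofReal (∫ x : ℝ, (v₁ x s - v₂ x s)^2) := by
    have h1 := ae_restrict_of_ae_restrict_of_subset Set.Ioc_subset_Icc_self hFv₁
    have h2 := ae_restrict_of_ae_restrict_of_subset Set.Ioc_subset_Icc_self hFv₂
    have h3 := ae_restrict_of_ae_restrict_of_subset Set.Ioc_subset_Icc_self hv₁2
    have h4 := ae_restrict_of_ae_restrict_of_subset Set.Ioc_subset_Icc_self hv₂2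
    filter_upwards [h1, h2, h3, h4] with s hs1 hs2 hs3 hs4
    exact step_planch F l hlip hFmeas (fun x => v₁ x s) (fun x => v₂ x s)
      (hv₁meas.comp (measurable_id.prodMk measurable_const))
      (hv₂meas.comp (measurable_id.prodMk measurable_const))
      hs1.1 hs1.2 hs2.1 hs2.2 hs3 hs4
  -- the grand ENNReal bound
  have hA : (∫⁻ t in Set.Ioc (0:ℝ) T, ∫⁻ p : ℝ, (‖W p t‖₊ : ENNReal)^2) ≤
      ENNReal.ofReal (Real.exp (2*a*T) * l^2 * T^2 * (∫ x : ℝ, |G x|)^2 *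
        ∫ t in (0:ℝ)..T, ∫ x : ℝ, (v₁ x t - v₂ x t) ^ 2) := by
    have hBnd := hB_lemma T hT v₁ v₂ hv₁meas hv₂meas hv₁2 hv₂2 hv₁L2 hv₂L2
    calc (∫⁻ t in Set.Ioc (0:ℝ) T, ∫⁻ p : ℝ, (‖W p t‖₊ : ENNReal)^2)
        ≤ ∫⁻ _t in Set.Ioc (0:ℝ) T,
            (ENNReal.ofReal (Real.exp (a*T) * ∫ x : ℝ, |G x|) ^ 2 * ENNReal.ofReal T *
            ∫⁻ p : ℝ, ∫⁻ s in Set.Ioc (0:ℝ) T,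
              (‖FT (fun x => F (v₁ x s) x) p - FT (fun x => F (v₂ x s) x) p‖₊ : ENNReal)^2) :=
          setLIntegral_mono measurable_const hInner
      _ = ENNReal.ofReal (Real.exp (a*T) * ∫ x : ℝ, |G x|) ^ 2 * ENNReal.ofReal T *
            (∫⁻ p : ℝ, ∫⁻ s in Set.Ioc (0:ℝ) T,
              (‖FT (fun x => F (v₁ x s) x) p - FT (fun x => F (v₂ x s) x) p‖₊ : ENNReal)^2) *
            ENNReal.ofReal T := by
          rw [setLIntegral_const, Real.volume_Ioc, sub_zero]
      _ = ENNReal.ofReal (Real.exp (a*T) * ∫ x : ℝ, |G x|) ^ 2 * ENNReal.ofReal T *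
            ENNReal.ofReal T *
            (∫⁻ s in Set.Ioc (0:ℝ) T, ∫⁻ p : ℝ,
              (‖FT (fun x => F (v₁ x s) x) p - FT (fun x => F (v₂ x s) x) p‖₊ : ENNReal)^2) := by
          rw [hswap]; ring
      _ ≤ ENNReal.ofReal (Real.exp (a*T) * ∫ x : ℝ, |G x|) ^ 2 * ENNReal.ofReal T *
            ENNReal.ofReal T *
            (∫⁻ s in Set.Ioc (0:ℝ) T,
              ENNReal.ofReal (l^2) * ENNReal.ofReal (∫ x : ℝ, (v₁ x s - v₂ x s)^2)) :=
          mul_le_mul_right (lintegral_mono_ae hae) _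
      _ = ENNReal.ofReal (Real.exp (a*T) * ∫ x : ℝ, |G x|) ^ 2 * ENNReal.ofReal T *
            ENNReal.ofReal T * (ENNReal.ofReal (l^2) *
            ENNReal.ofReal (∫ t in (0:ℝ)..T, ∫ x : ℝ, (v₁ x t - v₂ x t) ^ 2)) := by
          rw [lintegral_const_mul' _ _ ENNReal.ofReal_ne_top, hBnd]
      _ = ENNReal.ofReal (Real.exp (2*a*T) * l^2 * T^2 * (∫ x : ℝ, |G x|)^2 *
            ∫ t in (0:ℝ)..T, ∫ x : ℝ, (v₁ x t - v₂ x t) ^ 2) := by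
          rw [← ENNReal.ofReal_pow (by positivity), ← ENNReal.ofReal_mul (by positivity),
            ← ENNReal.ofReal_mul (by positivity), ← ENNReal.ofReal_mul (by positivity),
            ← ENNReal.ofReal_mul (by positivity)]
          congr 1
          rw [show (Real.exp (a*T) * ∫ x : ℝ, |G x|)^2
              = Real.exp (2*a*T) * (∫ x : ℝ, |G x|)^2 by
            rw [mul_pow, sq (Real.exp (a*T)), ← Real.exp_add]
            ring_nf]
          ring
  -- convert the Bochner integrals to the ENNReal bound
  rw [intervalIntegral.integral_of_le hT.le]
  by_cases hgint : Integrable (fun t => ∫ p : ℝ, ‖W p t‖ ^ 2)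
      (volume.restrict (Set.Ioc (0:ℝ) T))
  · rw [MeasureTheory.integral_eq_lintegral_of_nonneg_ae
      (ae_of_all _ fun t => integral_nonneg fun p => sq_nonneg _) hgint.1]
    have hpt : ∀ t : ℝ, ENNReal.ofReal (∫ p : ℝ, ‖W p t‖ ^ 2)
        ≤ ∫⁻ p : ℝ, (‖W p t‖₊ : ENNReal)^2 := by
      intro t
      by_cases hI : Integrable (fun p : ℝ => ‖W p t‖ ^ 2) volume
      · rw [ofReal_integral_eq_lintegral_ofReal hI (ae_of_all _ fun p => sq_nonneg _)]
        refine le_of_eq (lintegral_congr fun p => ?_)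
        rw [ENNReal.ofReal_pow (norm_nonneg _), ofReal_norm, enorm_eq_nnnorm]
      · rw [integral_undef hI]
        simp
    have hchain : (∫⁻ t in Set.Ioc (0:ℝ) T, ENNReal.ofReal (∫ p : ℝ, ‖W p t‖ ^ 2))
        ≤ ENNReal.ofReal (Real.exp (2*a*T) * l^2 * T^2 * (∫ x : ℝ, |G x|)^2 *
          ∫ t in (0:ℝ)..T, ∫ x : ℝ, (v₁ x t - v₂ x t) ^ 2) :=
      le_trans (lintegral_mono fun t => hpt t) hA
    calc (∫⁻ t in Set.Ioc (0:ℝ) T, ENNReal.ofReal (∫ p : ℝ, ‖W p t‖ ^ 2)).toReal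
        ≤ (ENNReal.ofReal (Real.exp (2*a*T) * l^2 * T^2 * (∫ x : ℝ, |G x|)^2 *
            ∫ t in (0:ℝ)..T, ∫ x : ℝ, (v₁ x t - v₂ x t) ^ 2)).toReal :=
          ENNReal.toReal_mono ENNReal.ofReal_ne_top hchain
      _ = Real.exp (2*a*T) * l^2 * T^2 * (∫ x : ℝ, |G x|)^2 *
            ∫ t in (0:ℝ)..T, ∫ x : ℝ, (v₁ x t - v₂ x t) ^ 2 :=
          ENNReal.toReal_ofReal hRHSnn
  · rw [MeasureTheory.integral_undef hgint]
    exact hRHSnn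
end

section
/- (Corollary 1.4, nontriviality.) In addition to the hypotheses of the global well-posedness result, assume that x ↦ F(0,x) belongs to L¹(ℝ) ∩ L²(ℝ) and that the set { p ∈ ℝ : 𝓕(F(0,·))(p) ≠ 0 and Ĝ(p) ≠ 0 } has positive Lebesgue measure, where 𝓕(F(0,·)) denotes the Fourier transform of x ↦ F(0,x). Then the unique global solution u of the Duhamel integral equation is nontrivial; that is, u is not equal to 0 for almost every (x,t) ∈ ℝ × [0,∞). -/
open MeasureTheory

/-- `u` is a global mild (Duhamel) solution on `ℝ × [0,∞)` of
`∂u/∂t = -∂⁴u/∂x⁴ + b ∂u/∂x + a u + G * F(u,·)`, `u(·,0) = u₀`: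
it is measurable; `u(·,t) ∈ L¹(ℝ) ∩ L²(ℝ)` and `F(u(·,t),·) ∈ L¹(ℝ) ∩ L²(ℝ)` for
a.e. `t ≥ 0`; for every `T' > 0` one has `∫₀^{T'} ‖u(·,t)‖²_{L²} dt < ∞`,
`∫₀^{T'} ∫ p⁸ |û(p,t)|² dp dt < ∞` and
`∫₀^{T'} ∫ |(-p⁴+ibp+a) û(p,t) + √(2π) Ĝ(p) f̂_u(p,t)|² dp dt < ∞`; and the
Duhamel integral equation holds on the Fourier side for a.e. `t ≥ 0`, a.e. `p`. -/
def IsGlobalSolution (a b : ℝ) (G u₀ : ℝ → ℝ) (F : ℝ → ℝ → ℝ)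
    (u : ℝ → ℝ → ℝ) : Prop :=
  Measurable (Function.uncurry u) ∧
  (∀ᵐ t ∂(volume.restrict (Set.Ici (0:ℝ))),
    Integrable (fun x => u x t) ∧ Integrable (fun x => (u x t) ^ 2) ∧
      Integrable (fun x => F (u x t) x) ∧
      Integrable (fun x => (F (u x t) x) ^ 2)) ∧
  (∀ T' : ℝ, 0 < T' →
    (∫⁻ t in Set.Icc (0:ℝ) T', ENNReal.ofReal (∫ x : ℝ, (u x t) ^ 2)) < ⊤ ∧
    (∫⁻ t in Set.Icc (0:ℝ) T', ∫⁻ p : ℝ,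
      ENNReal.ofReal (p ^ 8 * ‖FT (fun x => u x t) p‖ ^ 2)) < ⊤ ∧
    (∫⁻ t in Set.Icc (0:ℝ) T', ∫⁻ p : ℝ,
      ENNReal.ofReal (‖(-(p : ℂ) ^ 4 + Complex.I * b * p + a) * FT (fun x => u x t) p +
        (Real.sqrt (2 * Real.pi) : ℂ) * FT G p *
          FT (fun x => F (u x t) x) p‖ ^ 2)) < ⊤) ∧
  (∀ᵐ t ∂(volume.restrict (Set.Ici (0:ℝ))), ∀ᵐ p ∂(volume : Measure ℝ),
    FT (fun x => u x t) p =
      Complex.exp ((t : ℂ) * (-(p : ℂ) ^ 4 + Complex.I * b * p + a)) * FT u₀ p +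
        ∫ s in (0:ℝ)..t,
          Complex.exp (((t - s : ℝ) : ℂ) * (-(p : ℂ) ^ 4 + Complex.I * b * p + a)) *
            (Real.sqrt (2 * Real.pi) : ℂ) * FT G p * FT (fun x => F (u x s) x) p)

lemma FT_congr' {f g : ℝ → ℝ} (h : ∀ᵐ x ∂(volume : Measure ℝ), f x = g x) (p : ℝ) :
    FT f p = FT g p := by
  unfold FT
  congr 1
  refine integral_congr_ae ?_
  filter_upwards [h] with x hx
  rw [hx]

lemma FT_ae_zero' {f : ℝ → ℝ} (h : ∀ᵐ x ∂(volume : Measure ℝ), f x = 0) (p : ℝ) :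
    FT f p = 0 := by
  rw [FT_congr' (g := fun _ => 0) h p]
  unfold FT
  simp

lemma FT_continuous' {φ : ℝ → ℝ} (hφ : Integrable φ) : Continuous (FT φ) := by
  unfold FT
  refine Continuous.mul continuous_const ?_
  refine continuous_of_dominated (bound := fun x => |φ x|) ?_ ?_ ?_ ?_
  · intro p
    refine (Complex.continuous_ofReal.comp_aestronglyMeasurable hφ.1).mul ?_
    refine (Complex.continuous_exp.comp ?_).aestronglyMeasurable
    continuity
  · intro p
    refine ae_of_all _ fun x => ?_
    rw [norm_mul]
    simp [Complex.norm_exp]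
  · exact hφ.abs
  · refine ae_of_all _ fun x => ?_
    continuity

lemma integral_calc' (t : ℝ) (L C : ℂ) (hL : L ≠ 0) :
    (∫ s in (0:ℝ)..t, Complex.exp (((t - s : ℝ) : ℂ) * L) * C)
      = C * (Complex.exp ((t:ℂ) * L) - 1) / L := by
  have h1 : ∀ s : ℝ, Complex.exp (((t - s : ℝ) : ℂ) * L) * C
      = (Complex.exp ((t:ℂ) * L) * C) * Complex.exp ((-L) * (s:ℂ)) := by
    intro s
    have h : (((t - s : ℝ) : ℂ) * L) = (t:ℂ)*L + (-L)*(s:ℂ) := by push_cast; ring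
    rw [h, Complex.exp_add]; ring
  rw [intervalIntegral.integral_congr
    (g := fun s => (Complex.exp ((t:ℂ)*L)*C) * Complex.exp ((-L)*(s:ℂ))) (fun s _ => h1 s)]
  rw [intervalIntegral.integral_const_mul, integral_exp_mul_complex (neg_ne_zero.mpr hL)]
  rw [show (-L)*((t:ℝ):ℂ) = -((t:ℂ)*L) by ring]
  have h2 : Complex.exp ((t:ℂ)*L) * Complex.exp (-((t:ℂ)*L)) = 1 := by
    rw [← Complex.exp_add, add_neg_cancel, Complex.exp_zero]
  have h3 : Complex.exp ((-L)*((0:ℝ):ℂ)) = 1 := by norm_num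
  rw [h3, show (Complex.exp (-((t:ℂ)*L)) - 1)/(-L) = (1 - Complex.exp (-((t:ℂ)*L)))/L by ring]
  linear_combination (-C/L) * h2

lemma re_lam' (a b p : ℝ) : (-(p:ℂ)^4 + Complex.I*b*p + a).re = a - p^4 := by
  simp [pow_succ, Complex.add_re, Complex.neg_re, Complex.mul_re, Complex.mul_im,
    Complex.I_re, Complex.I_im, Complex.ofReal_re, Complex.ofReal_im]
  ring

theorem stmt18 (a b T k l : ℝ) (ha : 0 ≤ a) (hT : 0 < T) (hk : 0 < k) (hl : 0 < l)
    (G : ℝ → ℝ) (hGne : G ≠ 0) (hGsmooth : ContDiff ℝ 4 G)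
    (hGint : ∀ n : ℕ, n ≤ 4 → Integrable (iteratedDeriv n G))
    (hGdecay : ∀ n : ℕ, n ≤ 3 →
      Filter.Tendsto (iteratedDeriv n G) (Filter.cocompact ℝ) (nhds 0))
    (g : ℝ)
    (hg : g = Real.sqrt ((∫ x : ℝ, |G x|) ^ 2 + (∫ x : ℝ, |iteratedDeriv 4 G x|) ^ 2))
    (F : ℝ → ℝ → ℝ) (hFmeas : Measurable (Function.uncurry F))
    (h : ℝ → ℝ) (hh2 : Integrable (fun x => (h x) ^ 2)) (hhpos : ∀ x, 0 ≤ h x)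
    (hbound : ∀ u x : ℝ, |F u x| ≤ k * |u| + h x)
    (hlip : ∀ u₁ u₂ x : ℝ, |F u₁ x - F u₂ x| ≤ l * |u₁ - u₂|)
    (u₀ : ℝ → ℝ) (hu₀smooth : ContDiff ℝ 4 u₀)
    (hu₀int : ∀ n : ℕ, n ≤ 4 →
      Integrable (iteratedDeriv n u₀) ∧
        Integrable (fun x => (iteratedDeriv n u₀ x) ^ 2))
    (hu₀decay : ∀ n : ℕ, n ≤ 3 →
      Filter.Tendsto (iteratedDeriv n u₀) (Filter.cocompact ℝ) (nhds 0))
    (hsmall : g * l *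
      Real.sqrt (T ^ 2 * Real.exp (2 * a * T) * (1 + 2 * (a + |b| + 1) ^ 2) + 2) < 1)
    (hF0int : Integrable (fun x => F 0 x) ∧ Integrable (fun x => (F 0 x) ^ 2))
    (hsupp : 0 < volume {p : ℝ | FT (fun x => F 0 x) p ≠ 0 ∧ FT G p ≠ 0}) :
    ∀ u : ℝ → ℝ → ℝ, IsGlobalSolution a b G u₀ F u →
      ¬ (∀ᵐ t ∂(volume.restrict (Set.Ici (0:ℝ))),
          ∀ᵐ x ∂(volume : Measure ℝ), u x t = 0) := by
  classical
  intro u hu hcontra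
  obtain ⟨-, -, -, hduh⟩ := hu
  set ν := (volume : Measure ℝ).restrict (Set.Ici (0:ℝ)) with hν
  set LL : ℝ → ℂ := fun p => -(p:ℂ)^4 + Complex.I*b*p + a with hLL
  set CC : ℝ → ℂ := fun p =>
    (Real.sqrt (2*Real.pi) : ℂ) * FT G p * FT (fun x => F 0 x) p with hCC
  set QQ : ℝ → ℂ := fun p => FT u₀ p * LL p + CC p with hQQ
  have sqrtne : ((Real.sqrt (2 * Real.pi) : ℝ) : ℂ) ≠ 0 := by
    simp only [ne_eq, Complex.ofReal_eq_zero]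
    exact ne_of_gt (Real.sqrt_pos.mpr (by positivity))
  have hLLre : ∀ p : ℝ, (LL p).re = a - p^4 := fun p => re_lam' a b p
  have hcontra' := (ae_restrict_iff' measurableSet_Ici).mp hcontra
  have hFs : ∀ᵐ s ∂(volume : Measure ℝ), s ∈ Set.Ici (0:ℝ) →
      ∀ p : ℝ, FT (fun x => F (u x s) x) p = FT (fun x => F 0 x) p := by
    filter_upwards [hcontra'] with s hs hmem p
    refine FT_congr' ?_ p
    filter_upwards [hs hmem] with x hx
    rw [hx]
  -- key identity
  have hkey : ∀ᵐ (t : ℝ) ∂ν, ∀ᵐ (p : ℝ) ∂(volume : Measure ℝ),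
      ¬ (a - p^4 ≠ 0 ∧ Complex.exp ((t:ℂ) * LL p) * QQ p ≠ CC p) := by
    filter_upwards [hduh, hcontra, ae_restrict_mem measurableSet_Ici] with t ht hut htmem
    filter_upwards [ht] with p hp
    rintro ⟨hre, hne⟩
    apply hne
    have hLne : LL p ≠ 0 := by
      intro h0
      exact hre (by rw [← hLLre p, h0, Complex.zero_re])
    have hFTu : FT (fun x => u x t) p = 0 := FT_ae_zero' hut p
    rw [hFTu] at hp
    have hI : (∫ s in (0:ℝ)..t,
        Complex.exp (((t - s : ℝ) : ℂ) * (-(p : ℂ) ^ 4 + Complex.I * b * p + a)) *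
          (Real.sqrt (2 * Real.pi) : ℂ) * FT G p * FT (fun x => F (u x s) x) p)
        = ∫ s in (0:ℝ)..t,
        Complex.exp (((t - s : ℝ) : ℂ) * (LL p)) * CC p := by
      apply intervalIntegral.integral_congr_ae
      filter_upwards [hFs] with s hF hsmem
      rw [Set.uIoc_of_le htmem] at hsmem
      rw [hF (le_of_lt hsmem.1) p, hCC, hLL]
      ring
    rw [hI, integral_calc' t (LL p) (CC p) hLne] at hp
    have hLeq : (-(p : ℂ) ^ 4 + Complex.I * b * p + a) = LL p := by rw [hLL]
    rw [hLeq] at hp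
    field_simp at hp
    rw [hQQ]
    linear_combination -hp
  -- Fubini swap
  set N : Set (ℝ × ℝ) := {z | a - z.2^4 ≠ 0 ∧
      Complex.exp ((z.1:ℂ) * LL z.2) * QQ z.2 ≠ CC z.2} with hNdef
  have hGcont : Continuous (FT G) :=
    FT_continuous' (by simpa using hGint 0 (by norm_num))
  have hF0cont : Continuous (FT (fun x => F 0 x)) := FT_continuous' hF0int.1
  have hu0cont : Continuous (FT u₀) :=
    FT_continuous' (by simpa using (hu₀int 0 (by norm_num)).1)
  have hLLcont : Continuous LL := by
    rw [hLL]
    exact ((Complex.continuous_ofReal.pow 4).neg.add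
      (continuous_const.mul Complex.continuous_ofReal)).add continuous_const
  have hCCcont : Continuous CC := by
    rw [hCC]
    exact (continuous_const.mul hGcont).mul hF0cont
  have hQQcont : Continuous QQ := by
    rw [hQQ]
    exact (hu0cont.mul hLLcont).add hCCcont
  have hNmeas : MeasurableSet N := by
    rw [hNdef]
    refine MeasurableSet.inter ?_ ?_
    · have hcont : Continuous fun z : ℝ × ℝ => a - z.2^4 :=
        continuous_const.sub ((continuous_pow 4).comp continuous_snd)
      exact (hcont.measurable (measurableSet_singleton 0)).compl
    · have hcont : Continuous fun z : ℝ × ℝ =>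
          Complex.exp ((z.1:ℂ) * LL z.2) * QQ z.2 := by
        refine Continuous.mul ?_ (hQQcont.comp continuous_snd)
        exact Complex.continuous_exp.comp
          ((Complex.continuous_ofReal.comp continuous_fst).mul (hLLcont.comp continuous_snd))
      exact (measurableSet_eq_fun hcont.measurable
        (hCCcont.comp continuous_snd).measurable).compl
  have hprod : (ν.prod (volume : Measure ℝ)) N = 0 := by
    rw [Measure.prod_apply hNmeas]
    have hslices : ∀ᵐ (t : ℝ) ∂ν, (volume : Measure ℝ) (Prod.mk t ⁻¹' N) = 0 := by
      filter_upwards [hkey] with t ht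
      have ht' := ae_iff.mp ht
      convert ht' using 2
      ext q
      simp only [Set.mem_preimage, hNdef, Set.mem_setOf_eq, not_not]
    calc (∫⁻ t, (volume : Measure ℝ) (Prod.mk t ⁻¹' N) ∂ν)
        = ∫⁻ _, 0 ∂ν := lintegral_congr_ae hslices
      _ = 0 := lintegral_zero
  have hsymm : (∫⁻ p, ν ((fun t => (t,p)) ⁻¹' N) ∂(volume : Measure ℝ)) = 0 := by
    rw [← Measure.prod_apply_symm hNmeas]; exact hprod
  have hae2 : ∀ᵐ (p : ℝ) ∂(volume : Measure ℝ), ν ((fun t => (t,p)) ⁻¹' N) = 0 :=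
    (lintegral_eq_zero_iff (measurable_measure_prodMk_right hNmeas)).mp hsymm
  -- quartic zero set is null
  have hquart : (volume : Measure ℝ) {p : ℝ | a - p^4 = 0} = 0 := by
    have hsub : {p : ℝ | a - p^4 = 0} ⊆
        {a ^ (((4:ℕ):ℝ))⁻¹, -(a ^ (((4:ℕ):ℝ))⁻¹)} := by
      intro p hp
      have hp4 : |p|^(4:ℕ) = a := by
        have : a - p^4 = 0 := hp
        rw [pow_abs, abs_of_nonneg (by positivity)]
        linarith
      have habs : |p| = a ^ (((4:ℕ):ℝ))⁻¹ := by
        rw [← hp4, Real.pow_rpow_inv_natCast (abs_nonneg p) (by norm_num)]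
      rcases abs_eq (by positivity) |>.mp habs with hc | hc
      · exact Or.inl hc
      · exact Or.inr hc
    refine measure_mono_null hsub ?_
    exact ((Set.finite_singleton _).insert _).measure_zero _
  -- choose a good point p
  have hbadnull : (volume : Measure ℝ)
      ({p : ℝ | a - p^4 = 0} ∪ {p : ℝ | ¬ ν ((fun t => (t,p)) ⁻¹' N) = 0}) = 0 :=
    measure_union_null hquart (ae_iff.mp hae2)
  have hpos : (volume : Measure ℝ)
      ({p : ℝ | FT (fun x => F 0 x) p ≠ 0 ∧ FT G p ≠ 0} \
        ({p : ℝ | a - p^4 = 0} ∪ {p : ℝ | ¬ ν ((fun t => (t,p)) ⁻¹' N) = 0})) ≠ 0 := by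
    rw [measure_diff_null hbadnull]
    exact ne_of_gt hsupp
  obtain ⟨p, hpS, hpbad⟩ := nonempty_of_measure_ne_zero hpos
  have hre : a - p^4 ≠ 0 := fun h0 => hpbad (Or.inl h0)
  have hslice : ν ((fun t => (t,p)) ⁻¹' N) = 0 := by
    by_contra hc; exact hpbad (Or.inr hc)
  have haet : ∀ᵐ (t : ℝ) ∂ν, Complex.exp ((t:ℂ) * LL p) * QQ p = CC p := by
    rw [ae_iff]
    refine measure_mono_null ?_ hslice
    intro t ht
    exact ⟨hre, ht⟩
  have hCne : CC p ≠ 0 := by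
    rw [hCC]
    exact mul_ne_zero (mul_ne_zero sqrtne hpS.2) hpS.1
  have hνIoi : ∀ M : ℝ, 0 ≤ M → ν (Set.Ioi M) = ⊤ := by
    intro M hM
    rw [hν, Measure.restrict_apply measurableSet_Ioi]
    have hss : Set.Ioi M ∩ Set.Ici (0:ℝ) = Set.Ioi M :=
      Set.inter_eq_left.mpr (fun x hx => le_trans hM (le_of_lt hx))
    rw [hss, Real.volume_Ioi]
  by_cases hQ0 : QQ p = 0
  · have hne : ν ≠ 0 := by
      intro h0
      have h1 := hνIoi 0 le_rfl
      rw [h0] at h1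
      simp at h1
    have : (ae ν).NeBot := ae_neBot.mpr hne
    obtain ⟨t, ht⟩ := haet.exists
    rw [hQ0, mul_zero] at ht
    exact hCne ht.symm
  · have hcne : a - p^4 ≠ 0 := hre
    set t₀ := Real.log (‖CC p‖ / ‖QQ p‖) / (a - p^4) with ht₀
    have huniq : ∀ t : ℝ, Complex.exp ((t:ℂ) * LL p) * QQ p = CC p → t = t₀ := by
      intro t ht
      have h1 : ‖Complex.exp ((t:ℂ) * LL p)‖ = Real.exp (t * (a - p^4)) := by
        rw [Complex.norm_exp]
        congr 1
        rw [show ((t:ℂ) * LL p).re = t * (LL p).re by simp [Complex.mul_re], hLLre p]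
      have h2 : Real.exp (t * (a - p^4)) * ‖QQ p‖ = ‖CC p‖ := by
        rw [← h1, ← norm_mul, ht]
      have hQn : ‖QQ p‖ ≠ 0 := norm_ne_zero_iff.mpr hQ0
      have h3 : Real.exp (t * (a - p^4)) = ‖CC p‖ / ‖QQ p‖ :=
        (eq_div_iff hQn).mpr h2
      have h4 : t * (a - p^4) = Real.log (‖CC p‖ / ‖QQ p‖) := by
        rw [← h3, Real.log_exp]
      rw [ht₀, ← h4]
      field_simp
    have hone : ∀ᵐ (t : ℝ) ∂ν, t = t₀ := haet.mono huniq
    have h5 := ae_iff.mp hone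
    have h6 : ν (Set.Ioi (max 0 t₀)) = 0 :=
      measure_mono_null
        (fun t ht => ne_of_gt (lt_of_le_of_lt (le_max_right 0 t₀) ht)) h5
    rw [hνIoi (max 0 t₀) (le_max_left 0 t₀)] at h6
    exact absurd h6 (by simp)
end
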